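/- Consider a star graph with k+1 edges with lengths ℓ_e > 0 and weights ρ_e > 0 (e ∈ {0,…,k}). There exists β > 0, depending only on k, (ℓ_e) and (ρ_e), such that for every δ ∈ (0, 1], every f ∈ ℂ^{k+1}, and every family g = (g_e) of continuously differentiable functions g_e : [0, δℓ_e] → ℂ with a common value g_0(0) = g_1(0) = ⋯ = g_k(0) and with g_e(δℓ_e) = f_e for all e, one has ∑_{e=0}^k ρ_e ∫_0^{δℓ_e} (|g_e'(t)|² + |g_e(t)|²) dt ≥ δ^{−1}·β·(|f⌞1⃗|² + δ²·|f|²). -/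

import Mathlib

/-!
On an edge of length `L = δℓ`, the fundamental theorem of calculus and Cauchy–Schwarz give
`‖g L - g t‖² ≤ L ∫ ‖g'‖²` for every `t ∈ [0, L]`. At `t = 0` this bounds the deviation of `f_e`
from the common vertex value `c`; averaging `‖g L‖² ≤ 2‖g t‖² + 2‖g L - g t‖²` over `t` bounds
`δ²‖f_e‖²`, using `δ ≤ 1`. Summing over the edges, and using that the mean of `f` minimises
`∑ ‖f_e - c‖²` over `c`, gives the estimate with `β⁻¹ = ∑_e (3ℓ_e + 2/ℓ_e)/ρ_e`.
-/

open MeasureTheory Set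

/-- The component of `f ∈ ℂ^{k+1}` orthogonal to `1⃗ = (k+1)^{-1/2}(1,…,1)`:
`f⌞1⃗ = f − ⟨f,1⃗⟩·1⃗`, i.e. `(f⌞1⃗)_i = f_i − (∑_j f_j)/(k+1)`. -/
noncomputable def perpOne {m : ℕ} (f : Fin m → ℂ) : Fin m → ℂ :=
  fun i => f i - (∑ j, f j) / (m : ℂ)

theorem sq_integral_le_mul_integral_sq {φ : ℝ → ℝ} {a b : ℝ} (hab : a ≤ b)
    (hφ : IntervalIntegrable φ volume a b)
    (hφ2 : IntervalIntegrable (fun x => φ x ^ 2) volume a b) :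
    (∫ x in a..b, φ x) ^ 2 ≤ (b - a) * ∫ x in a..b, φ x ^ 2 := by
  rcases hab.eq_or_lt with rfl | hlt
  · simp
  set S := ∫ x in a..b, φ x
  set c := S / (b - a)
  have hpos : 0 < b - a := sub_pos.2 hlt
  -- the variance of `φ` about its mean value `c` is nonnegative
  have hvar : 0 ≤ ∫ x in a..b, (φ x - c) ^ 2 :=
    intervalIntegral.integral_nonneg hab fun x _ => sq_nonneg _
  have hexpand : ∫ x in a..b, (φ x - c) ^ 2 = (∫ x in a..b, φ x ^ 2) - S ^ 2 / (b - a) := by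
    have h1 : IntervalIntegrable (fun x => φ x ^ 2 - 2 * c * φ x) volume a b :=
      hφ2.sub (hφ.const_mul _)
    have hsq : ∀ x, (φ x - c) ^ 2 = (φ x ^ 2 - 2 * c * φ x) + c ^ 2 := fun x => by ring
    simp_rw [hsq]
    rw [intervalIntegral.integral_add h1 intervalIntegrable_const,
      intervalIntegral.integral_sub hφ2 (hφ.const_mul _), intervalIntegral.integral_const_mul,
      intervalIntegral.integral_const, smul_eq_mul]
    simp only [c, S]
    field_simp
    ring
  rw [hexpand, sub_nonneg, div_le_iff₀ hpos] at hvar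
  linarith

noncomputable def h1Energy {E : Type*} [NormedAddCommGroup E] [NormedSpace ℝ E] (g : ℝ → E)
    (L : ℝ) : ℝ :=
  ∫ t in (0 : ℝ)..L, (‖deriv g t‖ ^ 2 + ‖g t‖ ^ 2)

section DerivativeBounds

variable {E : Type*} [NormedAddCommGroup E] [NormedSpace ℝ E] {g : ℝ → E} {a b : ℝ}

theorem ContDiffOn.hasDerivAt_of_mem_Ioo (hg : ContDiffOn ℝ 1 g (Icc a b)) {x : ℝ}
    (hx : x ∈ Ioo a b) : HasDerivAt g (deriv g x) x :=
  ((hg.differentiableOn one_ne_zero x (Ioo_subset_Icc_self hx)).differentiableAt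
    (Icc_mem_nhds hx.1 hx.2)).hasDerivAt

theorem ContDiffOn.intervalIntegrable_comp_deriv {G : Type*} [NormedAddCommGroup G] {F : E → G}
    (hF : Continuous F) (hg : ContDiffOn ℝ 1 g (Icc a b)) (hab : a < b) :
    IntervalIntegrable (fun x => F (deriv g x)) volume a b := by
  -- `deriv g` agrees on `Ioo a b` with `derivWithin g (Icc a b)`, which is continuous on `Icc a b`
  have hcont : ContinuousOn (fun x => F (derivWithin g (Icc a b) x)) (Icc a b) :=
    hF.comp_continuousOn (hg.continuousOn_derivWithin (uniqueDiffOn_Icc hab) le_rfl)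
  rw [intervalIntegrable_iff_integrableOn_Ioo_of_le hab.le]
  refine (hcont.integrableOn_Icc.mono_set Ioo_subset_Icc_self).congr_fun (fun x hx => ?_)
    measurableSet_Ioo
  simp only [derivWithin_of_mem_nhds (Icc_mem_nhds hx.1 hx.2)]

theorem h1Energy_nonneg {L : ℝ} (hL : 0 ≤ L) : 0 ≤ h1Energy g L :=
  intervalIntegral.integral_nonneg hL fun _ _ => by positivity

variable [CompleteSpace E]

theorem ContDiffOn.norm_sub_sq_le (hg : ContDiffOn ℝ 1 g (Icc a b)) (hab : a < b) {t : ℝ}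
    (ht : t ∈ Icc a b) :
    ‖g b - g t‖ ^ 2 ≤ (b - a) * ∫ x in a..b, ‖deriv g x‖ ^ 2 := by
  have hftc : ∫ x in t..b, deriv g x = g b - g t :=
    intervalIntegral.integral_eq_sub_of_hasDerivAt_of_le ht.2
      (hg.continuousOn.mono (Icc_subset_Icc_left ht.1))
      (fun x hx => hg.hasDerivAt_of_mem_Ioo ⟨ht.1.trans_lt hx.1, hx.2⟩)
      ((hg.intervalIntegrable_comp_deriv continuous_id hab).mono_set <| by
        rw [uIcc_of_le ht.2, uIcc_of_le hab.le]; exact Icc_subset_Icc_left ht.1)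
  have hnorm : ‖g b - g t‖ ≤ ∫ x in a..b, ‖deriv g x‖ :=
    calc ‖g b - g t‖ ≤ ∫ x in t..b, ‖deriv g x‖ := by
          rw [← hftc]; exact intervalIntegral.norm_integral_le_integral_norm ht.2
      _ ≤ ∫ x in a..b, ‖deriv g x‖ :=
          intervalIntegral.integral_mono_interval ht.1 ht.2 le_rfl
            (Filter.Eventually.of_forall fun _ => norm_nonneg _)
            (hg.intervalIntegrable_comp_deriv continuous_norm hab)
  calc ‖g b - g t‖ ^ 2 ≤ (∫ x in a..b, ‖deriv g x‖) ^ 2 := by gcongr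
    _ ≤ (b - a) * ∫ x in a..b, ‖deriv g x‖ ^ 2 :=
      sq_integral_le_mul_integral_sq hab.le (hg.intervalIntegrable_comp_deriv continuous_norm hab)
        (hg.intervalIntegrable_comp_deriv (continuous_norm.pow 2) hab)

theorem ContDiffOn.mul_norm_sq_le (hg : ContDiffOn ℝ 1 g (Icc a b)) (hab : a < b) :
    (b - a) * ‖g b‖ ^ 2 ≤
      2 * (∫ x in a..b, ‖g x‖ ^ 2) + 2 * (b - a) ^ 2 * ∫ x in a..b, ‖deriv g x‖ ^ 2 := by
  set A := ∫ x in a..b, ‖deriv g x‖ ^ 2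
  have hpt : ∀ t ∈ Icc a b, ‖g b‖ ^ 2 ≤ 2 * ‖g t‖ ^ 2 + 2 * (b - a) * A := by
    intro t ht
    have htri : ‖g b‖ ≤ ‖g t‖ + ‖g b - g t‖ := norm_le_norm_add_norm_sub' (g b) (g t)
    nlinarith [hg.norm_sub_sq_le hab ht, sq_nonneg (‖g t‖ - ‖g b - g t‖), norm_nonneg (g b)]
  have hint := intervalIntegral.integral_mono_on (μ := volume) hab.le intervalIntegrable_const
    ((((hg.continuousOn.norm.pow 2).intervalIntegrable_of_Icc hab.le).const_mul 2).add
      intervalIntegrable_const) hpt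
  rw [intervalIntegral.integral_const, intervalIntegral.integral_add
      (((hg.continuousOn.norm.pow 2).intervalIntegrable_of_Icc hab.le).const_mul 2)
      intervalIntegrable_const, intervalIntegral.integral_const_mul,
    intervalIntegral.integral_const, smul_eq_mul, smul_eq_mul] at hint
  simp only [Pi.pow_apply] at hint
  linarith

theorem ContDiffOn.scaled_trace_le_h1Energy {δ ℓ : ℝ} (hδ : δ ∈ Ioc 0 1) (hℓ : 0 < ℓ)
    (hg : ContDiffOn ℝ 1 g (Icc 0 (δ * ℓ))) :
    ‖g (δ * ℓ) - g 0‖ ^ 2 + δ ^ 2 * ‖g (δ * ℓ)‖ ^ 2 ≤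
      δ * (3 * ℓ + 2 / ℓ) * h1Energy g (δ * ℓ) := by
  obtain ⟨hδ0, hδ1⟩ := hδ
  have hL : 0 < δ * ℓ := mul_pos hδ0 hℓ
  set A := ∫ t in (0 : ℝ)..δ * ℓ, ‖deriv g t‖ ^ 2
  set B := ∫ t in (0 : ℝ)..δ * ℓ, ‖g t‖ ^ 2
  have hA : 0 ≤ A := intervalIntegral.integral_nonneg hL.le fun _ _ => by positivity
  have hB : 0 ≤ B := intervalIntegral.integral_nonneg hL.le fun _ _ => by positivity
  have henergy : h1Energy g (δ * ℓ) = A + B :=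
    intervalIntegral.integral_add (hg.intervalIntegrable_comp_deriv (continuous_norm.pow 2) hL)
      ((hg.continuousOn.norm.pow 2).intervalIntegrable_of_Icc hL.le)
  have hdiff : ‖g (δ * ℓ) - g 0‖ ^ 2 ≤ δ * (ℓ * A) := by
    have := hg.norm_sub_sq_le hL (left_mem_Icc.2 hL.le)
    rwa [sub_zero, mul_assoc] at this
  have hend : δ ^ 2 * ‖g (δ * ℓ)‖ ^ 2 ≤ δ * (2 * ℓ * A + 2 / ℓ * B) := by
    have htrace := hg.mul_norm_sq_le hL
    rw [sub_zero] at htrace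
    have hδ3 : δ ^ 3 ≤ δ := by nlinarith [mul_le_mul_of_nonneg_left hδ1 hδ0.le]
    calc δ ^ 2 * ‖g (δ * ℓ)‖ ^ 2 = δ / ℓ * (δ * ℓ * ‖g (δ * ℓ)‖ ^ 2) := by field_simp
      _ ≤ δ / ℓ * (2 * B + 2 * (δ * ℓ) ^ 2 * A) := by gcongr
      _ = δ ^ 3 * (2 * ℓ * A) + δ * (2 / ℓ * B) := by field_simp; ring
      _ ≤ δ * (2 * ℓ * A) + δ * (2 / ℓ * B) := by gcongr
      _ = δ * (2 * ℓ * A + 2 / ℓ * B) := by ring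
  have hcross : 0 ≤ δ * (3 * ℓ * B + 2 / ℓ * A) := by positivity
  rw [henergy]
  linarith

end DerivativeBounds

theorem sum_norm_sub_sq_le_of_sum_sub_eq_zero {ι E : Type*} [NormedAddCommGroup E]
    [InnerProductSpace ℝ E] (s : Finset ι) (f : ι → E) {a : E} (ha : ∑ i ∈ s, (f i - a) = 0)
    (c : E) : ∑ i ∈ s, ‖f i - a‖ ^ 2 ≤ ∑ i ∈ s, ‖f i - c‖ ^ 2 := by
  have hexpand : ∀ i,
      ‖f i - c‖ ^ 2 = ‖f i - a‖ ^ 2 + 2 * inner ℝ (f i - a) (a - c) + ‖a - c‖ ^ 2 := fun i => by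
    rw [← norm_add_sq_real, sub_add_sub_cancel]
  simp only [hexpand, Finset.sum_add_distrib, ← Finset.mul_sum, ← sum_inner, ha, inner_zero_left,
    mul_zero, add_zero, Finset.sum_const]
  exact le_add_of_nonneg_right (by positivity)

theorem sum_perpOne {m : ℕ} (f : Fin m → ℂ) : ∑ i, perpOne f i = 0 := by
  rcases Nat.eq_zero_or_pos m with rfl | hm
  · simp
  simp only [perpOne, Finset.sum_sub_distrib, Finset.sum_const, Finset.card_univ,
    Fintype.card_fin, nsmul_eq_mul]
  have : (m : ℂ) ≠ 0 := Nat.cast_ne_zero.2 hm.ne'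
  field_simp
  ring

theorem sum_norm_perpOne_sq_le {m : ℕ} (f : Fin m → ℂ) (c : ℂ) :
    ∑ i, ‖perpOne f i‖ ^ 2 ≤ ∑ i, ‖f i - c‖ ^ 2 :=
  sum_norm_sub_sq_le_of_sum_sub_eq_zero _ f (sum_perpOne f) c

theorem stmt7_general (k : ℕ)
    (ℓ ρ : Fin (k + 1) → ℝ) (hℓ : ∀ e, 0 < ℓ e) (hρ : ∀ e, 0 < ρ e) :
    ∃ β : ℝ, 0 < β ∧
      ∀ δ : ℝ, δ ∈ Ioc (0 : ℝ) 1 → ∀ f : Fin (k + 1) → ℂ,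
        ∀ g : Fin (k + 1) → ℝ → ℂ,
          (∀ e, ContDiffOn ℝ 1 (g e) (Icc 0 (δ * ℓ e))) →
          (∀ e e', g e 0 = g e' 0) →
          (∀ e, g e (δ * ℓ e) = f e) →
          δ⁻¹ * β * ((∑ i, ‖perpOne f i‖ ^ 2) + δ ^ 2 * ∑ i, ‖f i‖ ^ 2) ≤
            ∑ e, ρ e * ∫ t in (0 : ℝ)..(δ * ℓ e),
              (‖deriv (g e) t‖ ^ 2 + ‖g e t‖ ^ 2) := by
  set M := ∑ e, (3 * ℓ e + 2 / ℓ e) / ρ e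
  have hcoef : ∀ e, 0 < (3 * ℓ e + 2 / ℓ e) / ρ e := fun e => by
    have := hℓ e; have := hρ e; positivity
  have hM : 0 < M := Finset.sum_pos (fun e _ => hcoef e) Finset.univ_nonempty
  refine ⟨M⁻¹, inv_pos.2 hM, fun δ hδ f g hg hvertex hgf => ?_⟩
  have hedge : ∀ e, ‖f e - g 0 0‖ ^ 2 + δ ^ 2 * ‖f e‖ ^ 2 ≤
      δ * M * (ρ e * h1Energy (g e) (δ * ℓ e)) := fun e => by
    have hcoef_le : 3 * ℓ e + 2 / ℓ e ≤ M * ρ e :=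
      (div_le_iff₀ (hρ e)).1 (Finset.single_le_sum (fun i _ => (hcoef i).le) (Finset.mem_univ e))
    have hE := h1Energy_nonneg (g := g e) (mul_pos hδ.1 (hℓ e)).le
    have htrace := (hg e).scaled_trace_le_h1Energy hδ (hℓ e)
    rw [hgf e, hvertex e 0] at htrace
    calc _ ≤ δ * (3 * ℓ e + 2 / ℓ e) * h1Energy (g e) (δ * ℓ e) := htrace
      _ ≤ δ * (M * ρ e) * h1Energy (g e) (δ * ℓ e) := by gcongr; exact hδ.1.le
      _ = _ := by ring
  have hsum : (∑ i, ‖perpOne f i‖ ^ 2) + δ ^ 2 * ∑ i, ‖f i‖ ^ 2 ≤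
      δ * M * ∑ e, ρ e * h1Energy (g e) (δ * ℓ e) :=
    calc _ ≤ ∑ e, (‖f e - g 0 0‖ ^ 2 + δ ^ 2 * ‖f e‖ ^ 2) := by
          rw [Finset.sum_add_distrib, ← Finset.mul_sum]
          exact add_le_add_left (sum_norm_perpOne_sq_le f _) _
      _ ≤ _ := by rw [Finset.mul_sum]; exact Finset.sum_le_sum fun e _ => hedge e
  calc δ⁻¹ * M⁻¹ * ((∑ i, ‖perpOne f i‖ ^ 2) + δ ^ 2 * ∑ i, ‖f i‖ ^ 2)
      ≤ δ⁻¹ * M⁻¹ * (δ * M * ∑ e, ρ e * h1Energy (g e) (δ * ℓ e)) := by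
        have := hδ.1; gcongr
    _ = ∑ e, ρ e * h1Energy (g e) (δ * ℓ e) := by field_simp [hδ.1.ne']

/-- On a star graph with `k+1` edges of lengths `ℓ_e` and weights `ρ_e`,
there is `β > 0` such that for every scaling `δ ∈ (0,1]`, every boundary datum `f` and every
`C¹` star function `g` on the `δ`-scaled star with `g_e(δℓ_e) = f_e`,
`∑_e ρ_e ∫_0^{δℓ_e} (|g_e'|² + |g_e|²) ≥ δ⁻¹·β·(|f⌞1⃗|² + δ²·|f|²)`. -/
theorem stmt7 (k : ℕ) (hk : 1 ≤ k)
    (ℓ ρ : Fin (k + 1) → ℝ) (hℓ : ∀ e, 0 < ℓ e) (hρ : ∀ e, 0 < ρ e) :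
    ∃ β : ℝ, 0 < β ∧
      ∀ δ : ℝ, δ ∈ Ioc (0 : ℝ) 1 → ∀ f : Fin (k + 1) → ℂ,
        ∀ g : Fin (k + 1) → ℝ → ℂ,
          (∀ e, ContDiffOn ℝ 1 (g e) (Icc 0 (δ * ℓ e))) →
          (∀ e e', g e 0 = g e' 0) →
          (∀ e, g e (δ * ℓ e) = f e) →
          δ⁻¹ * β * ((∑ i, ‖perpOne f i‖ ^ 2) + δ ^ 2 * ∑ i, ‖f i‖ ^ 2) ≤
            ∑ e, ρ e * ∫ t in (0 : ℝ)..(δ * ℓ e),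
              (‖deriv (g e) t‖ ^ 2 + ‖g e t‖ ^ 2) :=
  stmt7_general k ℓ ρ hℓ hρ
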